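/- The explicit piecewise linear density f is subexponential: f ∈ 𝓛₀ and (∫_0^x f(x−y) f(y) dy)/f(x) → 2 as x → ∞; that is, f ∈ 𝓢₀. -/

import Mathlib

open MeasureTheory Filter Set

noncomputable section

/-- `a_n = 2^(n²)`. -/
def aSeq (n : ℕ) : ℝ := 2 ^ (n ^ 2)

/-- `m_n` : the least positive integer `k` with `k ≥ (√5/√6)·n`. -/
def mIdx (n : ℕ) : ℕ := max 1 ⌈(Real.sqrt 5 / Real.sqrt 6) * (n : ℝ)⌉₊

/-- `b_n = a_n + a_{m_n}·(ln (n+1))²`. -/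
def bSeq (n : ℕ) : ℝ := aSeq n + aSeq (mIdx n) * (Real.log ((n : ℝ) + 1)) ^ 2

/-- `c_n = (a_{n+1} + b_n)/2`. -/
def cSeq (n : ℕ) : ℝ := (aSeq (n + 1) + bSeq n) / 2

/-- `f` is affine (the linear interpolation of its endpoint values) on `[p, q]`. -/
def AffineOnIcc (f : ℝ → ℝ) (p q : ℝ) : Prop :=
  ∀ x ∈ Set.Icc p q, f x = f p + (x - p) / (q - p) * (f q - f p)

/-- The explicit continuous piecewise linear construction `f₀ : [0,∞) → (0,∞)`
with `f₀(0) = 1`, `f₀(a_n) = 2 a_n⁻³`, `f₀(b_n) = 2 a_n⁻³ / ln(n+1)`,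
`f₀(c_n) = 2 a_n⁻³`, affine on `[0,a₁]`, `[a_n,b_n]`, `[b_n,c_n]`, `[c_n,a_{n+1}]`. -/
def PWConstruction (f₀ : ℝ → ℝ) : Prop :=
  ContinuousOn f₀ (Set.Ici 0) ∧
  (∀ x : ℝ, 0 ≤ x → 0 < f₀ x) ∧
  f₀ 0 = 1 ∧
  (∀ n : ℕ, 1 ≤ n →
    f₀ (aSeq n) = 2 / (aSeq n) ^ 3 ∧
    f₀ (bSeq n) = 2 / (aSeq n) ^ 3 / Real.log ((n : ℝ) + 1) ∧
    f₀ (cSeq n) = 2 / (aSeq n) ^ 3) ∧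
  AffineOnIcc f₀ 0 (aSeq 1) ∧
  (∀ n : ℕ, 1 ≤ n →
    AffineOnIcc f₀ (aSeq n) (bSeq n) ∧
    AffineOnIcc f₀ (bSeq n) (cSeq n) ∧
    AffineOnIcc f₀ (cSeq n) (aSeq (n + 1)))

/-- The normalized extension `f = f₀ / ∫₀^∞ f₀(y) dy`, extended by `0` on `(-∞,0)`. -/
def normExt (f₀ : ℝ → ℝ) : ℝ → ℝ :=
  fun x => if x < 0 then 0 else f₀ x / ∫ y in Set.Ici (0:ℝ), f₀ y

/-- The long-tailed density class `𝓛₀`. -/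
def LongTailedDensity (f : ℝ → ℝ) : Prop :=
  (∀ᶠ x in atTop, 0 < f x) ∧
  ∀ t : ℝ, Tendsto (fun x => f (x + t) / f x) atTop (nhds 1)

/-- The subexponential density class `𝓢₀`. -/
def SubexpDensity (f : ℝ → ℝ) : Prop :=
  LongTailedDensity f ∧
  Tendsto (fun x => (∫ y in (0:ℝ)..x, f (x - y) * f y) / f x) atTop (nhds 2)

/-!
On the block `[a_n, a_{n+1}]` the function `f₀` is affine on three pieces, each of length at
least `a_{m_n} / 4`, with values between `2 a_{n+1}⁻³ / (n + 1)` and `4 a_n⁻³`. Hence `f₀` is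
Lipschitz on `[a_k, ∞)` with constant `16 / (a_k³ a_{m_k})`, and since `m_k ≥ k / 2` this is
`o(f₀ x)` for `x ∈ [a_{k+1}, a_{k+2}]`: the gain `2^{m_k²}` beats the loss `2^{12k}` from
`a_{k+2}³ / a_k³`. So for every `δ > 0` and large `x`, `|f(x + y) - f(x)| ≤ δ |y| f(x)` whenever
`|y| ≤ x / 2`. This gives `f ∈ 𝓛₀` at once. By symmetry the convolution is twice its integral
over `[0, x/2]`, and there the same estimate gives
`∫₀^{x/2} f(x - y) f(y) dy / f(x) = ∫₀^{x/2} f + O(δ ∫ y f(y) dy) → 1`;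
the first moment is finite because `f₀(x) = O(x^{-5/2})`.
-/

open Topology

lemma tendsto_of_forall_eventually_abs_sub_le {α : Type*} {l : Filter α} {u : α → ℝ} {a C : ℝ}
    (h : ∀ δ > 0, ∀ᶠ x in l, |u x - a| ≤ δ * C) : Tendsto u l (𝓝 a) := by
  rw [Metric.tendsto_nhds]
  intro ε hε
  have hC : 0 < |C| + 1 := by positivity
  filter_upwards [h (ε / (|C| + 1)) (div_pos hε hC)] with x hx
  rw [Real.dist_eq]
  calc |u x - a| ≤ ε / (|C| + 1) * C := hx
    _ ≤ ε / (|C| + 1) * |C| := by gcongr; exact le_abs_self C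
    _ < ε := by rw [div_mul_eq_mul_div, div_lt_iff₀ hC]; nlinarith

lemma LipschitzOnWith.Icc_union_Icc {α : Type*} [PseudoMetricSpace α] {f : ℝ → α} {K : NNReal}
    {p q r : ℝ} (h₁ : LipschitzOnWith K f (Icc p q)) (h₂ : LipschitzOnWith K f (Icc q r)) :
    LipschitzOnWith K f (Icc p r) := by
  have key : ∀ x ∈ Icc p r, ∀ y ∈ Icc p r, x ≤ y → dist (f x) (f y) ≤ K * dist x y := by
    intro x hx y hy hxy
    rcases le_total y q with hyq | hqy
    · exact h₁.dist_le_mul x ⟨hx.1, hxy.trans hyq⟩ y ⟨hy.1, hyq⟩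
    rcases le_total q x with hqx | hxq
    · exact h₂.dist_le_mul x ⟨hqx, hx.2⟩ y ⟨hqy, hy.2⟩
    calc dist (f x) (f y) ≤ dist (f x) (f q) + dist (f q) (f y) := dist_triangle _ _ _
      _ ≤ K * dist x q + K * dist q y :=
          add_le_add (h₁.dist_le_mul x ⟨hx.1, hxq⟩ q ⟨hx.1.trans hxq, le_rfl⟩)
            (h₂.dist_le_mul q ⟨le_rfl, hqy.trans hy.2⟩ y ⟨hqy, hy.2⟩)
      _ = K * dist x y := by
          simp only [Real.dist_eq, abs_of_nonpos (sub_nonpos.2 hxq),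
            abs_of_nonpos (sub_nonpos.2 hqy), abs_of_nonpos (sub_nonpos.2 hxy)]
          ring
  refine LipschitzOnWith.of_dist_le_mul fun x hx y hy => ?_
  rcases le_total x y with hxy | hyx
  · exact key x hx y hy hxy
  · rw [dist_comm, dist_comm x]; exact key y hy x hx hyx

namespace AffineOnIcc

variable {f : ℝ → ℝ} {p q : ℝ}

lemma mapsTo_Icc (h : AffineOnIcc f p q) (hpq : p ≤ q) {lo hi : ℝ} (hp : f p ∈ Icc lo hi)
    (hq : f q ∈ Icc lo hi) : MapsTo f (Icc p q) (Icc lo hi) := by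
  intro x hx
  have hθ₀ : 0 ≤ (x - p) / (q - p) := div_nonneg (by linarith [hx.1]) (by linarith)
  have hθ₁ : (x - p) / (q - p) ≤ 1 := div_le_one_of_le₀ (by linarith [hx.2]) (by linarith)
  rw [h x hx]
  constructor <;> nlinarith [hp.1, hp.2, hq.1, hq.2]

lemma lipschitzOnWith (h : AffineOnIcc f p q) (hpq : p < q) {K : ℝ}
    (hK : |f q - f p| ≤ K * (q - p)) : LipschitzOnWith K.toNNReal f (Icc p q) := by
  refine LipschitzOnWith.of_dist_le_mul fun x hx y hy => ?_
  have hqp : 0 < q - p := sub_pos.2 hpq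
  have hslope : |f q - f p| / (q - p) ≤ K := (div_le_iff₀ hqp).2 hK
  have hfxy : f x - f y = (f q - f p) / (q - p) * (x - y) := by
    rw [h x hx, h y hy]; field_simp; ring
  rw [Real.dist_eq, Real.dist_eq, hfxy, abs_mul, abs_div, abs_of_pos hqp]
  exact mul_le_mul_of_nonneg_right (hslope.trans (Real.le_coe_toNNReal K)) (abs_nonneg _)

end AffineOnIcc

lemma integrableOn_Ioi_of_abs_le_rpow {g : ℝ → ℝ} {c C p : ℝ} (hg : ContinuousOn g (Ici 0))
    (hc : 0 < c) (hp : p < -1) (hbound : ∀ x > c, |g x| ≤ C * x ^ p) :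
    IntegrableOn g (Ioi 0) := by
  have hnear : IntegrableOn g (Ioc 0 c) :=
    ((hg.mono Icc_subset_Ici_self).integrableOn_compact isCompact_Icc).mono_set
      Ioc_subset_Icc_self
  have hfar : IntegrableOn g (Ioi c) := by
    refine Integrable.mono' ((integrableOn_Ioi_rpow_of_lt hp hc).const_mul C)
      ((hg.mono fun x hx => le_of_lt (hc.trans hx)).aestronglyMeasurable measurableSet_Ioi) ?_
    filter_upwards [ae_restrict_mem measurableSet_Ioi] with x hx
    exact hbound x hx
  rw [← Ioc_union_Ioi_eq_Ioi hc.le]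
  exact hnear.union hfar

def VanishingRelSlope (g : ℝ → ℝ) : Prop :=
  ∀ δ > 0, ∀ᶠ x in atTop, ∀ y, |y| ≤ x / 2 → |g (x + y) - g x| ≤ δ * |y| * g x

namespace VanishingRelSlope

variable {g : ℝ → ℝ}

lemma of_eq_div {g' : ℝ → ℝ} {c : ℝ} (h : VanishingRelSlope g) (hc : 0 < c)
    (hg' : ∀ x, 0 ≤ x → g' x = g x / c) : VanishingRelSlope g' := by
  intro δ hδ
  filter_upwards [h δ hδ, eventually_ge_atTop 0] with x hx hx₀ y hy
  have hxy : 0 ≤ x + y := by linarith [neg_abs_le y]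
  rw [hg' _ hxy, hg' _ hx₀, ← sub_div, abs_div, abs_of_pos hc, ← mul_div_assoc]
  exact div_le_div_of_nonneg_right (hx y hy) hc.le

lemma longTailedDensity (h : VanishingRelSlope g) (hpos : ∀ᶠ x in atTop, 0 < g x) :
    LongTailedDensity g := by
  refine ⟨hpos, fun t => tendsto_of_forall_eventually_abs_sub_le (C := |t|) fun δ hδ => ?_⟩
  filter_upwards [h δ hδ, hpos, eventually_ge_atTop (2 * |t|)] with x hx hgx hxt
  rw [div_sub_one hgx.ne', abs_div, abs_of_pos hgx, div_le_iff₀ hgx]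
  exact hx t (by linarith)

end VanishingRelSlope

section Convolution

variable {g : ℝ → ℝ}

lemma intervalIntegrable_conv (hg : ContinuousOn g (Ici 0)) (x : ℝ) {a b : ℝ} (ha : 0 ≤ a)
    (hab : a ≤ b) (hb : b ≤ x) : IntervalIntegrable (fun y => g (x - y) * g y) volume a b := by
  refine ContinuousOn.intervalIntegrable_of_Icc hab (ContinuousOn.mul ?_ ?_)
  · exact hg.comp (continuousOn_const.sub continuousOn_id) fun y hy => by
      simp only [mem_Ici]; linarith [hy.2]
  · exact hg.mono fun y hy => ha.trans hy.1

lemma integral_conv_eq_two_mul (hg : ContinuousOn g (Ici 0)) {x : ℝ} (hx : 0 ≤ x) :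
    ∫ y in (0:ℝ)..x, g (x - y) * g y = 2 * ∫ y in (0:ℝ)..x / 2, g (x - y) * g y := by
  have hreflect : ∫ y in x / 2..x, g (x - y) * g y = ∫ y in (0:ℝ)..x / 2, g (x - y) * g y := by
    have := intervalIntegral.integral_comp_sub_left (fun u => g u * g (x - u)) (a := x / 2)
      (b := x) x
    simp only [sub_sub_cancel, sub_self, show x - x / 2 = x / 2 by ring] at this
    rw [this]
    exact intervalIntegral.integral_congr fun y _ => mul_comm _ _
  rw [← intervalIntegral.integral_add_adjacent_intervals (b := x / 2)
    (intervalIntegrable_conv hg x le_rfl (by linarith) (by linarith))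
    (intervalIntegrable_conv hg x (by linarith) (by linarith) le_rfl), hreflect]
  ring

lemma abs_integral_conv_div_sub_le (hg : ContinuousOn g (Ici 0)) (hnn : ∀ y, 0 ≤ y → 0 ≤ g y)
    {x δ : ℝ} (hx : 0 ≤ x) (hgx : 0 < g x)
    (hslope : ∀ y ∈ Icc 0 (x / 2), |g (x - y) - g x| ≤ δ * y * g x) :
    |(∫ y in (0:ℝ)..x / 2, g (x - y) * g y) / g x - ∫ y in (0:ℝ)..x / 2, g y|
      ≤ δ * ∫ y in (0:ℝ)..x / 2, y * g y := by
  have hx2 : 0 ≤ x / 2 := by linarith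
  have hgi : ContinuousOn g (Icc 0 (x / 2)) := hg.mono fun y hy => hy.1
  have hconv := intervalIntegrable_conv hg x le_rfl hx2 (by linarith)
  have hint := hgi.intervalIntegrable_of_Icc (μ := volume) hx2
  have hmom : IntervalIntegrable (fun y => y * g y) volume 0 (x / 2) :=
    (continuousOn_id.mul hgi).intervalIntegrable_of_Icc hx2
  have hdiff : (∫ y in (0:ℝ)..x / 2, g (x - y) * g y) / g x - ∫ y in (0:ℝ)..x / 2, g y
      = ∫ y in (0:ℝ)..x / 2, (g (x - y) - g x) / g x * g y := by
    rw [← intervalIntegral.integral_div, ← intervalIntegral.integral_sub (hconv.div_const _) hint]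
    refine intervalIntegral.integral_congr fun y _ => ?_
    field_simp
  rw [hdiff, ← intervalIntegral.integral_const_mul, ← Real.norm_eq_abs]
  refine intervalIntegral.norm_integral_le_of_norm_le hx2 (ae_of_all _ fun y hy => ?_)
    (hmom.const_mul δ)
  have hy : y ∈ Icc 0 (x / 2) := Ioc_subset_Icc_self hy
  rw [Real.norm_eq_abs, abs_mul, abs_div, abs_of_pos hgx, abs_of_nonneg (hnn y hy.1)]
  calc |g (x - y) - g x| / g x * g y ≤ δ * y * g y := by
        gcongr
        · exact hnn y hy.1
        · rw [div_le_iff₀ hgx]; exact hslope y hy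
    _ = δ * (y * g y) := by ring

lemma intervalIntegral_le_integral_Ioi {h : ℝ → ℝ} (hint : IntegrableOn h (Ioi 0))
    (hnn : ∀ y, 0 < y → 0 ≤ h y) {b : ℝ} (hb : 0 ≤ b) :
    ∫ y in (0:ℝ)..b, h y ≤ ∫ y in Ioi 0, h y := by
  rw [intervalIntegral.integral_of_le hb]
  exact setIntegral_mono_set hint ((ae_restrict_iff' measurableSet_Ioi).2 (ae_of_all _ hnn))
    Ioc_subset_Ioi_self.eventuallyLE

theorem tendsto_integral_conv_div (hg : ContinuousOn g (Ici 0)) (hnn : ∀ y, 0 ≤ y → 0 ≤ g y)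
    (hpos : ∀ᶠ x in atTop, 0 < g x) (hint : IntegrableOn g (Ioi 0))
    (hmom : IntegrableOn (fun y => y * g y) (Ioi 0)) (hslope : VanishingRelSlope g) :
    Tendsto (fun x => (∫ y in (0:ℝ)..x, g (x - y) * g y) / g x) atTop
      (𝓝 (2 * ∫ y in Ioi 0, g y)) := by
  have hhead : Tendsto (fun x => ∫ y in (0:ℝ)..x / 2, g y) atTop (𝓝 (∫ y in Ioi 0, g y)) :=
    intervalIntegral_tendsto_integral_Ioi 0 hint (tendsto_id.atTop_div_const two_pos)
  have herr : Tendsto (fun x => (∫ y in (0:ℝ)..x / 2, g (x - y) * g y) / g x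
      - ∫ y in (0:ℝ)..x / 2, g y) atTop (𝓝 0) := by
    refine tendsto_of_forall_eventually_abs_sub_le (C := ∫ y in Ioi 0, y * g y) fun δ hδ => ?_
    filter_upwards [hslope δ hδ, hpos, eventually_ge_atTop 0] with x hx hgx hx₀
    rw [sub_zero]
    refine (abs_integral_conv_div_sub_le (δ := δ) hg hnn hx₀ hgx fun y hy => ?_).trans ?_
    · have := hx (-y) (by rw [abs_neg, abs_of_nonneg hy.1]; exact hy.2)
      rwa [← sub_eq_add_neg, abs_neg, abs_of_nonneg hy.1] at this
    · exact mul_le_mul_of_nonneg_left (intervalIntegral_le_integral_Ioi hmom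
        (fun y hy => mul_nonneg hy.le (hnn y hy.le)) (by linarith)) hδ.le
  have hsum := (herr.add hhead).const_mul 2
  rw [zero_add] at hsum
  refine hsum.congr' ?_
  filter_upwards [eventually_ge_atTop 0] with x hx
  rw [sub_add_cancel, integral_conv_eq_two_mul hg hx, mul_div_assoc]

end Convolution

theorem subexpDensity_of_vanishingRelSlope {g : ℝ → ℝ} (hg : ContinuousOn g (Ici 0))
    (hnn : ∀ y, 0 ≤ y → 0 ≤ g y) (hpos : ∀ᶠ x in atTop, 0 < g x) (hint : IntegrableOn g (Ioi 0))
    (hmom : IntegrableOn (fun y => y * g y) (Ioi 0)) (hmass : ∫ y in Ioi 0, g y = 1)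
    (hslope : VanishingRelSlope g) : SubexpDensity g := by
  refine ⟨hslope.longTailedDensity hpos, ?_⟩
  simpa [hmass] using tendsto_integral_conv_div hg hnn hpos hint hmom hslope

theorem subexpDensity_normExt {f₀ : ℝ → ℝ} (hcont : ContinuousOn f₀ (Ici 0))
    (hpos : ∀ x, 0 ≤ x → 0 < f₀ x) (hint : IntegrableOn f₀ (Ioi 0))
    (hmom : IntegrableOn (fun y => y * f₀ y) (Ioi 0)) (hslope : VanishingRelSlope f₀) :
    SubexpDensity (normExt f₀) := by
  set I := ∫ y in Ici (0 : ℝ), f₀ y with hI_def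
  have hI : 0 < I := by
    rw [hI_def, integral_Ici_eq_integral_Ioi, setIntegral_pos_iff_support_of_nonneg_ae
      (ae_restrict_of_forall_mem measurableSet_Ioi fun x hx => (hpos x (le_of_lt hx)).le) hint,
      show Function.support f₀ ∩ Ioi 0 = Ioi 0 from
        inter_eq_right.2 fun x hx => (hpos x (le_of_lt hx)).ne']
    simp
  have heq : ∀ x, 0 ≤ x → normExt f₀ x = f₀ x / I := fun x hx => if_neg (not_lt.2 hx)
  refine subexpDensity_of_vanishingRelSlope ?_ ?_ ?_ ?_ ?_ ?_ (hslope.of_eq_div hI heq)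
  · exact (hcont.div_const I).congr fun x hx => heq x hx
  · exact fun x hx => by rw [heq x hx]; exact div_nonneg (hpos x hx).le hI.le
  · filter_upwards [eventually_ge_atTop 0] with x hx
    rw [heq x hx]
    exact div_pos (hpos x hx) hI
  · exact IntegrableOn.congr_fun (hint.div_const I) (fun x hx => (heq x (le_of_lt hx)).symm)
      measurableSet_Ioi
  · refine IntegrableOn.congr_fun (hmom.div_const I) (fun x hx => ?_) measurableSet_Ioi
    rw [heq x (le_of_lt hx), mul_div_assoc]
  · rw [setIntegral_congr_fun measurableSet_Ioi fun x hx => heq x (le_of_lt hx), integral_div,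
      ← integral_Ici_eq_integral_Ioi, div_self hI.ne']

lemma aSeq_pos (n : ℕ) : 0 < aSeq n := by unfold aSeq; positivity

lemma aSeq_strictMono : StrictMono aSeq := fun _ _ h =>
  pow_lt_pow_right₀ one_lt_two (Nat.pow_lt_pow_left h two_ne_zero)

lemma aSeq_mono : Monotone aSeq := aSeq_strictMono.monotone

lemma natCast_le_aSeq (n : ℕ) : (n : ℝ) ≤ aSeq n :=
  calc (n : ℝ) ≤ 2 ^ n := by exact_mod_cast n.lt_two_pow_self.le
    _ ≤ aSeq n := pow_le_pow_right₀ one_le_two (Nat.le_self_pow two_ne_zero n)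

lemma two_mul_aSeq_le (n : ℕ) : 2 * aSeq n ≤ aSeq (n + 1) := by
  rw [aSeq, aSeq, ← pow_succ']
  exact pow_le_pow_right₀ one_le_two (Nat.pow_lt_pow_left n.lt_succ_self two_ne_zero)

lemma aSeq_add_two_pow_three (n : ℕ) : aSeq (n + 2) ^ 3 = aSeq n ^ 3 * 2 ^ (12 * n + 12) := by
  simp only [aSeq, ← pow_mul, ← pow_add]
  ring_nf

lemma exists_aSeq_lt_le {N : ℕ} {x : ℝ} (hx : aSeq N < x) :
    ∃ n, N ≤ n ∧ aSeq n < x ∧ x ≤ aSeq (n + 1) := by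
  have hmono : StrictMono fun j => aSeq (j + N) :=
    aSeq_strictMono.comp (strictMono_id.add_const N)
  have htends : Tendsto (fun j => aSeq (j + N)) atTop atTop :=
    (tendsto_add_atTop_iff_nat N).2
      (tendsto_atTop_mono natCast_le_aSeq tendsto_natCast_atTop_atTop)
  obtain ⟨j, hj⟩ := hmono.exists_between_of_tendsto_atTop htends (by simpa using hx)
  exact ⟨j + N, by omega, by simpa [add_right_comm] using hj⟩

lemma sqrt_five_div_sqrt_six_mem : √5 / √6 ∈ Icc (1 / 2 : ℝ) 1 := by
  constructor
  · rw [le_div_iff₀ (by positivity)]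
    nlinarith [Real.sq_sqrt (show (0:ℝ) ≤ 5 by norm_num), Real.sq_sqrt (show (0:ℝ) ≤ 6 by norm_num),
      Real.sqrt_nonneg 5, Real.sqrt_nonneg 6]
  · exact div_le_one_of_le₀ (Real.sqrt_le_sqrt (by norm_num)) (Real.sqrt_nonneg 6)

lemma mIdx_mono : Monotone mIdx := fun _ _ h =>
  max_le_max le_rfl (Nat.ceil_mono (mul_le_mul_of_nonneg_left (Nat.cast_le.2 h)
    (by positivity)))

lemma mIdx_le {n : ℕ} (hn : 1 ≤ n) : mIdx n ≤ n := by
  refine max_le hn (Nat.ceil_le.2 ?_)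
  calc √5 / √6 * n ≤ 1 * n := by gcongr; exact sqrt_five_div_sqrt_six_mem.2
    _ = n := one_mul _

lemma le_two_mul_mIdx (n : ℕ) : n ≤ 2 * mIdx n := by
  have h : (n : ℝ) ≤ 2 * mIdx n :=
    calc (n : ℝ) = 2 * (1 / 2 * n) := by ring
      _ ≤ 2 * (√5 / √6 * n) := by gcongr 2 * (?_ * _); exact sqrt_five_div_sqrt_six_mem.1
      _ ≤ 2 * mIdx n := by
          gcongr
          exact (Nat.le_ceil _).trans (Nat.cast_le.2 (le_max_right _ _))
  exact_mod_cast h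

lemma half_le_log_succ {n : ℕ} (hn : 1 ≤ n) : 1 / 2 ≤ Real.log ((n : ℝ) + 1) := by
  have hn' : (1 : ℝ) ≤ n := by exact_mod_cast hn
  have h2 : Real.log 2 ≤ Real.log ((n : ℝ) + 1) := Real.log_le_log two_pos (by linarith)
  linarith [Real.log_two_gt_d9]

lemma log_succ_le (n : ℕ) : Real.log ((n : ℝ) + 1) ≤ n := by
  linarith [Real.log_le_sub_one_of_pos (show (0 : ℝ) < n + 1 by positivity)]

lemma bSeq_le_half_aSeq_succ {n : ℕ} (hn : 1 ≤ n) : bSeq n ≤ aSeq (n + 1) / 2 := by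
  have hlog : Real.log ((n : ℝ) + 1) ^ 2 ≤ (n : ℝ) ^ 2 :=
    pow_le_pow_left₀ (by linarith [half_le_log_succ hn]) (log_succ_le n) 2
  have hpow : 1 + (n : ℝ) ^ 2 ≤ 2 ^ (2 * n) := by
    have : n ^ 2 < 2 ^ (2 * n) := by
      rw [pow_mul']; exact Nat.pow_lt_pow_left n.lt_two_pow_self two_ne_zero
    exact_mod_cast Nat.one_add_le_iff.2 this
  have hsucc : aSeq n * 2 ^ (2 * n) = aSeq (n + 1) / 2 := by
    rw [eq_div_iff two_ne_zero, aSeq, aSeq, mul_assoc, ← pow_succ, ← pow_add]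
    ring_nf
  calc bSeq n ≤ aSeq n + aSeq n * (n : ℝ) ^ 2 := by
        unfold bSeq
        gcongr
        · exact aSeq_pos n |>.le
        · exact aSeq_mono (mIdx_le hn)
    _ = aSeq n * (1 + (n : ℝ) ^ 2) := by ring
    _ ≤ aSeq n * 2 ^ (2 * n) := by gcongr; exact (aSeq_pos n).le
    _ = aSeq (n + 1) / 2 := hsucc

lemma aSeq_mIdx_div_four_le_piece_lengths {n : ℕ} (hn : 1 ≤ n) :
    aSeq (mIdx n) / 4 ≤ bSeq n - aSeq n ∧ aSeq (mIdx n) / 4 ≤ cSeq n - bSeq n ∧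
      aSeq (mIdx n) / 4 ≤ aSeq (n + 1) - cSeq n := by
  have hsq : 1 / 4 ≤ Real.log ((n : ℝ) + 1) ^ 2 := by nlinarith [half_le_log_succ hn]
  have hm : aSeq (mIdx n) ≤ aSeq (n + 1) := aSeq_mono ((mIdx_le hn).trans n.le_succ)
  have := bSeq_le_half_aSeq_succ hn
  refine ⟨?_, ?_, ?_⟩
  · unfold bSeq; nlinarith [aSeq_pos (mIdx n)]
  all_goals unfold cSeq; linarith

lemma aSeq_lt_bSeq_lt_cSeq_lt {n : ℕ} (hn : 1 ≤ n) :
    aSeq n < bSeq n ∧ bSeq n < cSeq n ∧ cSeq n < aSeq (n + 1) := by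
  have := aSeq_pos (mIdx n)
  have := aSeq_mIdx_div_four_le_piece_lengths hn
  refine ⟨?_, ?_, ?_⟩ <;> linarith

def blockSlope (n : ℕ) : ℝ := 8 * (2 / aSeq n ^ 3) / aSeq (mIdx n)

lemma blockSlope_pos (n : ℕ) : 0 < blockSlope n := by
  have := aSeq_pos n
  have := aSeq_pos (mIdx n)
  unfold blockSlope
  positivity

lemma blockSlope_antitone : Antitone blockSlope := fun m n h => by
  have := aSeq_pos m
  have := aSeq_pos (mIdx m)
  unfold blockSlope
  gcongr
  exacts [aSeq_mono h, aSeq_mono (mIdx_mono h)]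

lemma blockSlope_le_half_pow_mul {k : ℕ} (hk : 58 ≤ k) :
    blockSlope k ≤ (1 / 2) ^ k * (2 / aSeq (k + 2) ^ 3 / ((k : ℝ) + 2)) := by
  have hm : 14 * k + 17 ≤ mIdx k ^ 2 := by nlinarith [le_two_mul_mIdx k]
  have hk2 : (k : ℝ) + 2 ≤ 2 ^ (k + 2) := by exact_mod_cast (k + 2).lt_two_pow_self.le
  have hgrowth : 8 * 2 ^ k * ((k : ℝ) + 2) * 2 ^ (12 * k + 12) ≤ aSeq (mIdx k) :=
    calc 8 * 2 ^ k * ((k : ℝ) + 2) * 2 ^ (12 * k + 12)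
        ≤ 2 ^ 3 * 2 ^ k * 2 ^ (k + 2) * 2 ^ (12 * k + 12) := by gcongr; norm_num
      _ = 2 ^ (14 * k + 17) := by rw [← pow_add, ← pow_add, ← pow_add]; ring_nf
      _ ≤ aSeq (mIdx k) := pow_le_pow_right₀ one_le_two hm
  have := aSeq_pos k
  have := aSeq_pos (mIdx k)
  rw [blockSlope, aSeq_add_two_pow_three, one_div_pow, div_div, div_mul_div_comm, one_mul,
    mul_div_assoc', div_div, div_le_div_iff₀ (by positivity) (by positivity)]
  nlinarith [mul_le_mul_of_nonneg_left hgrowth (pow_pos (aSeq_pos k) 3).le]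

lemma two_mul_two_div_aSeq_le_rpow (n : ℕ) :
    2 * (2 / aSeq n ^ 3) ≤ 2 ^ 17 * aSeq (n + 1) ^ (-5 / 2 : ℝ) := by
  have hlhs : 2 * (2 / aSeq n ^ 3) = (2 : ℝ) ^ (2 - 3 * (n : ℝ) ^ 2) := by
    rw [Real.rpow_sub two_pos, Real.rpow_two, show 3 * (n : ℝ) ^ 2 = ((n ^ 2 * 3 : ℕ) : ℝ) by
      push_cast; ring, Real.rpow_natCast, aSeq, ← pow_mul]
    ring
  have hrhs : 2 ^ 17 * aSeq (n + 1) ^ (-5 / 2 : ℝ)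
      = (2 : ℝ) ^ (17 + -5 / 2 * ((n : ℝ) + 1) ^ 2) := by
    rw [Real.rpow_add two_pos, aSeq, ← Real.rpow_natCast 2 ((n + 1) ^ 2),
      ← Real.rpow_mul two_pos.le]
    push_cast
    ring_nf
  rw [hlhs, hrhs]
  -- the exponents differ by `(n - 5)² / 2`
  exact Real.rpow_le_rpow_of_exponent_le one_le_two (by nlinarith [sq_nonneg ((n : ℝ) - 5)])

def blockRange (n : ℕ) : Set ℝ := Icc (2 / aSeq (n + 1) ^ 3 / ((n : ℝ) + 1)) (2 * (2 / aSeq n ^ 3))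

namespace PWConstruction

variable {f₀ : ℝ → ℝ}

lemma nodes_mem_blockRange (hf : PWConstruction f₀) {n : ℕ} (hn : 1 ≤ n) :
    f₀ (aSeq n) ∈ blockRange n ∧ f₀ (bSeq n) ∈ blockRange n ∧ f₀ (cSeq n) ∈ blockRange n ∧
      f₀ (aSeq (n + 1)) ∈ blockRange n := by
  obtain ⟨ha, hb, hc⟩ := hf.2.2.2.1 n hn
  have ha' := (hf.2.2.2.1 (n + 1) (by omega)).1
  have hv : 0 < 2 / aSeq n ^ 3 := div_pos two_pos (pow_pos (aSeq_pos n) 3)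
  have hv' : 0 < 2 / aSeq (n + 1) ^ 3 := div_pos two_pos (pow_pos (aSeq_pos _) 3)
  have hvv' : 2 / aSeq (n + 1) ^ 3 ≤ 2 / aSeq n ^ 3 :=
    div_le_div_of_nonneg_left two_pos.le (pow_pos (aSeq_pos n) 3)
      (pow_le_pow_left₀ (aSeq_pos n).le (aSeq_mono n.le_succ) 3)
  have hlog := half_le_log_succ hn
  have hlo : 2 / aSeq (n + 1) ^ 3 / ((n : ℝ) + 1) ≤ 2 / aSeq (n + 1) ^ 3 :=
    div_le_self hv'.le (by linarith [n.cast_nonneg (α := ℝ)])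
  refine ⟨?_, ?_, ?_, ?_⟩ <;> simp only [blockRange, ha, hb, hc, ha', mem_Icc]
  · constructor <;> linarith
  · constructor
    · exact div_le_div₀ hv.le hvv' (by linarith) (by linarith [log_succ_le n])
    · rw [div_le_iff₀ (by linarith)]; nlinarith
  · constructor <;> linarith
  · constructor <;> linarith

lemma mapsTo_blockRange (hf : PWConstruction f₀) {n : ℕ} (hn : 1 ≤ n) :
    MapsTo f₀ (Icc (aSeq n) (aSeq (n + 1))) (blockRange n) := by
  obtain ⟨h₁, h₂, h₃⟩ := hf.2.2.2.2.2 n hn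
  obtain ⟨ha, hb, hc, ha'⟩ := hf.nodes_mem_blockRange hn
  obtain ⟨hab, hbc, hca⟩ := aSeq_lt_bSeq_lt_cSeq_lt hn
  rw [← Icc_union_Icc_eq_Icc (hab.trans hbc).le hca.le, ← Icc_union_Icc_eq_Icc hab.le hbc.le]
  exact ((h₁.mapsTo_Icc hab.le ha hb).union (h₂.mapsTo_Icc hbc.le hb hc)).union
    (h₃.mapsTo_Icc hca.le hc ha')

lemma lipschitzOnWith_block (hf : PWConstruction f₀) {n : ℕ} (hn : 1 ≤ n) :
    LipschitzOnWith (blockSlope n).toNNReal f₀ (Icc (aSeq n) (aSeq (n + 1))) := by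
  obtain ⟨h₁, h₂, h₃⟩ := hf.2.2.2.2.2 n hn
  obtain ⟨ha, hb, hc, ha'⟩ := hf.nodes_mem_blockRange hn
  obtain ⟨hab, hbc, hca⟩ := aSeq_lt_bSeq_lt_cSeq_lt hn
  obtain ⟨hlen₁, hlen₂, hlen₃⟩ := aSeq_mIdx_div_four_le_piece_lengths hn
  have hpiece : ∀ p q, f₀ p ∈ blockRange n → f₀ q ∈ blockRange n →
      aSeq (mIdx n) / 4 ≤ q - p → |f₀ q - f₀ p| ≤ blockSlope n * (q - p) := by
    intro p q hp hq hpq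
    have hlo : 0 ≤ 2 / aSeq (n + 1) ^ 3 / ((n : ℝ) + 1) := by
      have := aSeq_pos (n + 1); positivity
    have hm := aSeq_pos (mIdx n)
    calc |f₀ q - f₀ p| ≤ 2 * (2 / aSeq n ^ 3) := by
          rw [abs_sub_le_iff]; constructor <;> linarith [hp.1, hp.2, hq.1, hq.2]
      _ = blockSlope n * (aSeq (mIdx n) / 4) := by unfold blockSlope; field_simp; ring
      _ ≤ blockSlope n * (q - p) := by gcongr; exact (blockSlope_pos n).le
  exact ((h₁.lipschitzOnWith hab (hpiece _ _ ha hb hlen₁)).Icc_union_Icc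
    (h₂.lipschitzOnWith hbc (hpiece _ _ hb hc hlen₂))).Icc_union_Icc
    (h₃.lipschitzOnWith hca (hpiece _ _ hc ha' hlen₃))

lemma lipschitzOnWith_Ici (hf : PWConstruction f₀) {k : ℕ} (hk : 1 ≤ k) :
    LipschitzOnWith (blockSlope k).toNNReal f₀ (Ici (aSeq k)) := by
  have hIcc : ∀ j,
      LipschitzOnWith (blockSlope k).toNNReal f₀ (Icc (aSeq k) (aSeq (k + j + 1))) := by
    intro j
    induction j with
    | zero => exact hf.lipschitzOnWith_block hk
    | succ j ih =>
      exact ih.Icc_union_Icc ((hf.lipschitzOnWith_block (by omega)).weaken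
        (Real.toNNReal_le_toNNReal (blockSlope_antitone (by omega))))
  intro x hx y hy
  obtain ⟨j, hj⟩ := exists_nat_ge (max x y)
  have hle : max x y ≤ aSeq (k + j + 1) :=
    hj.trans ((natCast_le_aSeq j).trans (aSeq_mono (by omega)))
  exact hIcc j ⟨hx, (le_max_left _ _).trans hle⟩ ⟨hy, (le_max_right _ _).trans hle⟩

theorem vanishingRelSlope (hf : PWConstruction f₀) : VanishingRelSlope f₀ := by
  intro δ hδ
  have hsmall : ∀ᶠ k : ℕ in atTop, (1 / 2 : ℝ) ^ k ≤ δ :=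
    (tendsto_pow_atTop_nhds_zero_of_lt_one (by norm_num) (by norm_num)).eventually (ge_mem_nhds hδ)
  obtain ⟨k₀, hk₀⟩ := ((eventually_ge_atTop 58).and hsmall).exists_forall_of_atTop
  filter_upwards [eventually_gt_atTop (aSeq (k₀ + 1))] with x hx y hy
  obtain ⟨n, hn, hxn, hxn'⟩ := exists_aSeq_lt_le hx
  obtain ⟨k, rfl⟩ : ∃ k, n = k + 1 := ⟨n - 1, by omega⟩
  obtain ⟨hk, hkδ⟩ := hk₀ k (by omega)
  have hlow : 2 / aSeq (k + 2) ^ 3 / ((k : ℝ) + 2) ≤ f₀ x := by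
    have := (hf.mapsTo_blockRange (n := k + 1) (by omega) ⟨hxn.le, hxn'⟩).1
    push_cast at this
    rwa [show (k : ℝ) + 1 + 1 = k + 2 by ring] at this
  have hxk : aSeq k ≤ x := by linarith [two_mul_aSeq_le k, aSeq_pos k]
  have hxyk : aSeq k ≤ x + y := by linarith [two_mul_aSeq_le k, neg_abs_le y]
  have hlip := (hf.lipschitzOnWith_Ici (by omega : 1 ≤ k)).dist_le_mul (x + y) hxyk x hxk
  rw [Real.dist_eq, Real.dist_eq, add_sub_cancel_left,
    Real.coe_toNNReal _ (blockSlope_pos k).le] at hlip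
  have hslope : blockSlope k ≤ δ * f₀ x :=
    (blockSlope_le_half_pow_mul hk).trans (mul_le_mul hkδ hlow (by
      have := aSeq_pos (k + 2); positivity) hδ.le)
  calc |f₀ (x + y) - f₀ x| ≤ blockSlope k * |y| := hlip
    _ ≤ δ * f₀ x * |y| := by gcongr
    _ = δ * |y| * f₀ x := by ring

lemma le_const_mul_rpow (hf : PWConstruction f₀) {x : ℝ} (hx : aSeq 1 < x) :
    f₀ x ≤ 2 ^ 17 * x ^ (-5 / 2 : ℝ) := by
  obtain ⟨n, hn, hxn, hxn'⟩ := exists_aSeq_lt_le hx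
  calc f₀ x ≤ 2 * (2 / aSeq n ^ 3) := (hf.mapsTo_blockRange hn ⟨hxn.le, hxn'⟩).2
    _ ≤ 2 ^ 17 * aSeq (n + 1) ^ (-5 / 2 : ℝ) := two_mul_two_div_aSeq_le_rpow n
    _ ≤ 2 ^ 17 * x ^ (-5 / 2 : ℝ) := mul_le_mul_of_nonneg_left
        (Real.rpow_le_rpow_of_nonpos ((aSeq_pos n).trans hxn) hxn' (by norm_num)) (by norm_num)

lemma integrableOn (hf : PWConstruction f₀) : IntegrableOn f₀ (Ioi 0) :=
  integrableOn_Ioi_of_abs_le_rpow hf.1 (aSeq_pos 1) (by norm_num : (-5 / 2 : ℝ) < -1)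
    fun x hx => by
      rw [abs_of_pos (hf.2.1 x (aSeq_pos 1 |>.trans hx).le)]
      exact hf.le_const_mul_rpow hx

lemma integrableOn_id_mul (hf : PWConstruction f₀) :
    IntegrableOn (fun y => y * f₀ y) (Ioi 0) :=
  integrableOn_Ioi_of_abs_le_rpow (continuousOn_id.mul hf.1) (aSeq_pos 1)
    (by norm_num : (-3 / 2 : ℝ) < -1) fun x hx => by
      have hx₀ : 0 < x := (aSeq_pos 1).trans hx
      rw [abs_of_pos (mul_pos hx₀ (hf.2.1 x hx₀.le)), show (-3 / 2 : ℝ) = 1 + -5 / 2 by norm_num,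
        Real.rpow_add hx₀, Real.rpow_one]
      calc x * f₀ x ≤ x * (2 ^ 17 * x ^ (-5 / 2 : ℝ)) := by gcongr; exact hf.le_const_mul_rpow hx
        _ = 2 ^ 17 * (x * x ^ (-5 / 2 : ℝ)) := by ring

end PWConstruction

theorem pw_density_subexponential (f₀ : ℝ → ℝ) (hf₀ : PWConstruction f₀) :
    SubexpDensity (normExt f₀) :=
  subexpDensity_normExt hf₀.1 hf₀.2.1 hf₀.integrableOn hf₀.integrableOn_id_mul
    hf₀.vanishingRelSlope
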